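/- Let Φ : ℝ → ℝ be bounded and continuous with M := sup_{x∈ℝ}|Φ(x)| > 0. For V > 0 set λ(V) := 2M + V and f_λ^v(z) := (1+z²)^{3/2}·( v/√(1+z²) − Φ(v/√(1+z²)) + λ ). Then both integrals ∫₀^∞ dz/f_{λ(V)}^{V}(z) and ∫₀^∞ dz/f_{λ(V)}^{−V}(z) are finite, and the change of variables z ↦ V/√(1+z²) yields the identity ∫₀^∞ ( 1/f_{λ(V)}^{−V}(z) − 1/f_{λ(V)}^{V}(z) ) dz = (1/V)·∫₀^V [ z·(2z + Φ(−z) − Φ(z)) ] / [ √(V²−z²)·(z − Φ(z) + λ(V))·(−z − Φ(−z) + λ(V)) ] dz. -/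

import Mathlib

/-! Since `|Φ| ≤ M`, the second factor of `f_λ^v` is at least `λ - |v| - M`, so
`1/f_λ^v = O(1/(1+z²))` is integrable once `|v| + M < λ`. With `s = √(1+z²)` the substitution
`u = V/s` maps `(0,∞)` decreasingly onto `(0,V)`, with `|du/dz| = Vz/s³` and `√(V²-u²) = Vz/s`,
while `f_λ^{±V}(z) = s³·(±u - Φ(±u) + λ)`; the numerator `2u + Φ(-u) - Φ(u)` is the difference
of the two factors, so the transformed integrand is `V·(1/f_λ^{-V} - 1/f_λ^{V})`. -/

open Set Filter MeasureTheory

/-- The traveling wave slope nonlinearity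
`f_λ^v(z) = (1+z²)^{3/2}·(v/√(1+z²) − Φ(v/√(1+z²)) + λ)`. -/
noncomputable def fTW (Φ : ℝ → ℝ) (lam v z : ℝ) : ℝ :=
  (1 + z^2) ^ (3/2 : ℝ) *
    (v / Real.sqrt (1 + z^2) - Φ (v / Real.sqrt (1 + z^2)) + lam)

namespace Real

lemma one_le_sqrt_one_add_sq (z : ℝ) : 1 ≤ √(1 + z ^ 2) :=
  one_le_sqrt.2 (by nlinarith [sq_nonneg z])

lemma sqrt_one_add_sq_pos (z : ℝ) : 0 < √(1 + z ^ 2) :=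
  one_pos.trans_le (one_le_sqrt_one_add_sq z)

lemma sq_sqrt_one_add_sq (z : ℝ) : √(1 + z ^ 2) ^ 2 = 1 + z ^ 2 :=
  sq_sqrt (by positivity)

lemma one_add_sq_rpow_three_halves (z : ℝ) : (1 + z ^ 2) ^ (3 / 2 : ℝ) = √(1 + z ^ 2) ^ 3 := by
  rw [sqrt_eq_rpow, ← rpow_natCast ((1 + z ^ 2) ^ (1 / 2 : ℝ)) 3, ← rpow_mul (by positivity)]
  norm_num

lemma sqrt_sq_sub_sq_div_sqrt_one_add_sq {V z : ℝ} (hV : 0 ≤ V) (hz : 0 ≤ z) :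
    √(V ^ 2 - (V / √(1 + z ^ 2)) ^ 2) = V * z / √(1 + z ^ 2) := by
  have hs := sqrt_one_add_sq_pos z
  rw [← sqrt_sq (by positivity : 0 ≤ V * z / √(1 + z ^ 2))]
  congr 1
  field_simp
  rw [sq_sqrt_one_add_sq]
  ring

lemma hasDerivAt_div_sqrt_one_add_sq (V z : ℝ) :
    HasDerivAt (fun z => V / √(1 + z ^ 2)) (-(V * z) / √(1 + z ^ 2) ^ 3) z := by
  have hs := sqrt_one_add_sq_pos z
  have hsqrt : HasDerivAt (fun z => √(1 + z ^ 2)) (2 * z / (2 * √(1 + z ^ 2))) z :=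
    (((hasDerivAt_pow 2 z).const_add 1).sqrt (by positivity)).congr_deriv (by ring)
  refine ((hasDerivAt_const z V).div hsqrt hs.ne').congr_deriv ?_
  field_simp
  ring

lemma strictAntiOn_div_sqrt_one_add_sq {V : ℝ} (hV : 0 < V) :
    StrictAntiOn (fun z => V / √(1 + z ^ 2)) (Ici 0) := by
  intro z₁ hz₁ z₂ _ hlt
  have hz₁ : (0 : ℝ) ≤ z₁ := hz₁
  exact div_lt_div_of_pos_left hV (sqrt_one_add_sq_pos z₁)
    (sqrt_lt_sqrt (by positivity) (by nlinarith))

lemma image_div_sqrt_one_add_sq_Ioi {V : ℝ} (hV : 0 < V) :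
    (fun z => V / √(1 + z ^ 2)) '' Ioi 0 = Ioo 0 V := by
  ext u
  constructor
  · rintro ⟨z, hz, rfl⟩
    have hz : (0 : ℝ) < z := hz
    refine ⟨div_pos hV (sqrt_one_add_sq_pos z), div_lt_self hV ?_⟩
    exact (lt_sqrt zero_le_one).2 (by nlinarith)
  · rintro ⟨hu, huV⟩
    have hpos : 0 < (V / u) ^ 2 - 1 := by
      have : 1 < V / u := (one_lt_div hu).2 huV
      nlinarith
    refine ⟨√((V / u) ^ 2 - 1), sqrt_pos.2 hpos, ?_⟩
    simp only [sq_sqrt hpos.le, add_sub_cancel, sqrt_sq (div_pos hV hu).le]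
    field_simp

end Real

open Real

lemma integral_Ioo_eq_integral_Ioi_div_sqrt_one_add_sq {E : Type*} [NormedAddCommGroup E]
    [NormedSpace ℝ E] {V : ℝ} (hV : 0 < V) (g : ℝ → E) :
    ∫ u in Ioo 0 V, g u = ∫ z in Ioi 0, (V * z / √(1 + z ^ 2) ^ 3) • g (V / √(1 + z ^ 2)) := by
  rw [← image_div_sqrt_one_add_sq_Ioi hV, integral_image_eq_integral_abs_deriv_smul
    measurableSet_Ioi (fun z _ => (hasDerivAt_div_sqrt_one_add_sq V z).hasDerivWithinAt)
    ((strictAntiOn_div_sqrt_one_add_sq hV).injOn.mono Ioi_subset_Ici_self)]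
  refine setIntegral_congr_fun measurableSet_Ioi fun z (hz : 0 < z) => ?_
  have := sqrt_one_add_sq_pos z
  rw [neg_div, abs_neg, abs_of_pos (by positivity)]

noncomputable def substIntegrand (Φ : ℝ → ℝ) (lam V u : ℝ) : ℝ :=
  u * (2 * u + Φ (-u) - Φ u) / (√(V ^ 2 - u ^ 2) * (u - Φ u + lam) * (-u - Φ (-u) + lam))

section fTW

variable {Φ : ℝ → ℝ} {M lam v : ℝ}

lemma fTW_eq (Φ : ℝ → ℝ) (lam v z : ℝ) :
    fTW Φ lam v z = √(1 + z ^ 2) ^ 3 * (v / √(1 + z ^ 2) - Φ (v / √(1 + z ^ 2)) + lam) := by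
  rw [fTW, one_add_sq_rpow_three_halves]

lemma sub_le_sub_apply_add_of_abs_le (hΦ : ∀ x, |Φ x| ≤ M) {u : ℝ} :
    lam - |u| - M ≤ u - Φ u + lam := by
  linarith [neg_abs_le u, (abs_le.1 (hΦ u)).2]

lemma mul_one_add_sq_le_fTW (hΦ : ∀ x, |Φ x| ≤ M) (hlam : |v| + M ≤ lam) (z : ℝ) :
    (lam - |v| - M) * (1 + z ^ 2) ≤ fTW Φ lam v z := by
  have hs := one_le_sqrt_one_add_sq z
  have hu : |v / √(1 + z ^ 2)| ≤ |v| := by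
    rw [abs_div, abs_of_pos (sqrt_one_add_sq_pos z)]
    exact div_le_self (abs_nonneg v) hs
  have hpow : 1 + z ^ 2 ≤ √(1 + z ^ 2) ^ 3 :=
    calc 1 + z ^ 2 = √(1 + z ^ 2) ^ 2 * 1 := by rw [sq_sqrt_one_add_sq, mul_one]
      _ ≤ √(1 + z ^ 2) ^ 2 * √(1 + z ^ 2) := by gcongr
      _ = √(1 + z ^ 2) ^ 3 := (pow_succ _ 2).symm
  have hfactor := sub_le_sub_apply_add_of_abs_le (lam := lam) hΦ (u := v / √(1 + z ^ 2))
  rw [fTW_eq, mul_comm]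
  exact mul_le_mul hpow (by linarith) (by linarith) (by positivity)

lemma continuous_fTW (hΦc : Continuous Φ) (lam v : ℝ) : Continuous (fTW Φ lam v) := by
  have hu : Continuous fun z : ℝ => v / √(1 + z ^ 2) :=
    continuous_const.div (by fun_prop) fun z => (sqrt_one_add_sq_pos z).ne'
  rw [funext (fTW_eq Φ lam v)]
  exact (by fun_prop : Continuous fun z : ℝ => √(1 + z ^ 2) ^ 3).mul
    ((hu.sub (hΦc.comp hu)).add continuous_const)

lemma integrable_one_div_fTW (hΦc : Continuous Φ) (hΦ : ∀ x, |Φ x| ≤ M)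
    (hlam : |v| + M < lam) : Integrable fun z => 1 / fTW Φ lam v z := by
  have hc : 0 < lam - |v| - M := by linarith
  refine (integrable_inv_one_add_sq.const_mul (lam - |v| - M)⁻¹).mono'
    (continuous_const.div (continuous_fTW hΦc lam v) fun z => ?_).aestronglyMeasurable
    (Eventually.of_forall fun z => ?_)
  all_goals
    have hle := mul_one_add_sq_le_fTW hΦ hlam.le z
    have hpos : 0 < fTW Φ lam v z := lt_of_lt_of_le (by positivity) hle
  · exact hpos.ne'
  · rw [norm_of_nonneg (one_div_pos.2 hpos).le, one_div, ← mul_inv]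
    exact inv_anti₀ (by positivity) hle

lemma jacobian_mul_substIntegrand (hΦ : ∀ x, |Φ x| ≤ M) {V : ℝ} (hV : 0 < V)
    (hlam : V + M < lam) {z : ℝ} (hz : 0 < z) :
    V * z / √(1 + z ^ 2) ^ 3 * substIntegrand Φ lam V (V / √(1 + z ^ 2)) =
      V * (1 / fTW Φ lam (-V) z - 1 / fTW Φ lam V z) := by
  rw [substIntegrand, sqrt_sq_sub_sq_div_sqrt_one_add_sq hV.le hz.le, fTW_eq, fTW_eq, neg_div]
  set s := √(1 + z ^ 2)
  have hs : 0 < s := sqrt_one_add_sq_pos z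
  have hu : |V / s| ≤ V := by
    rw [abs_div, abs_of_pos hV, abs_of_pos hs]
    exact div_le_self hV.le (one_le_sqrt_one_add_sq z)
  have ha := sub_le_sub_apply_add_of_abs_le (lam := lam) hΦ (u := V / s)
  have hb := sub_le_sub_apply_add_of_abs_le (lam := lam) hΦ (u := -(V / s))
  rw [abs_neg] at hb
  have hnum : 2 * (V / s) + Φ (-(V / s)) - Φ (V / s) =
      (V / s - Φ (V / s) + lam) - (-(V / s) - Φ (-(V / s)) + lam) := by ring
  rw [hnum]
  generalize ha' : V / s - Φ (V / s) + lam = a at *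
  generalize hb' : -(V / s) - Φ (-(V / s)) + lam = b at *
  have ha0 : a ≠ 0 := by linarith
  have hb0 : b ≠ 0 := by linarith
  field_simp

theorem integral_one_div_fTW_neg_sub (hΦ : ∀ x, |Φ x| ≤ M) {V : ℝ} (hV : 0 < V)
    (hlam : V + M < lam) :
    ∫ z in Ioi (0 : ℝ), (1 / fTW Φ lam (-V) z - 1 / fTW Φ lam V z) =
      1 / V * ∫ u in (0 : ℝ)..V, substIntegrand Φ lam V u := by
  rw [intervalIntegral.integral_of_le hV.le, integral_Ioc_eq_integral_Ioo,
    integral_Ioo_eq_integral_Ioi_div_sqrt_one_add_sq hV]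
  simp only [smul_eq_mul]
  rw [setIntegral_congr_fun measurableSet_Ioi fun z hz =>
      jacobian_mul_substIntegrand hΦ hV hlam hz, integral_const_mul]
  field_simp

end fTW

/-- for bounded continuous `Φ` with `M = sup|Φ| > 0`, `λ(V) = 2M + V` and
`V > 0`, the integrals `∫₀^∞ dz/f_{λ(V)}^{±V}(z)` are finite, and the change of
variables `z ↦ V/√(1+z²)` gives
`∫₀^∞ (1/f_{λ(V)}^{−V} − 1/f_{λ(V)}^{V}) dz
  = (1/V)·∫₀^V z(2z+Φ(−z)−Φ(z)) / (√(V²−z²)(z−Φ(z)+λ(V))(−z−Φ(−z)+λ(V))) dz`. -/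
theorem stmt_10 (Φ : ℝ → ℝ) (M V : ℝ) (hΦc : Continuous Φ)
    (hbdd : BddAbove (Set.range fun x => |Φ x|))
    (hM : M = ⨆ x, |Φ x|) (hMpos : 0 < M) (hV : 0 < V) :
    IntegrableOn (fun z => 1 / fTW Φ (2*M + V) V z) (Ioi (0:ℝ)) ∧
    IntegrableOn (fun z => 1 / fTW Φ (2*M + V) (-V) z) (Ioi (0:ℝ)) ∧
    (∫ z in Ioi (0:ℝ), (1 / fTW Φ (2*M + V) (-V) z - 1 / fTW Φ (2*M + V) V z)) =
      (1/V) * ∫ z in (0:ℝ)..V, z * (2*z + Φ (-z) - Φ z) /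
        (Real.sqrt (V^2 - z^2) * (z - Φ z + (2*M + V)) * (-z - Φ (-z) + (2*M + V))) := by
  have hΦ : ∀ x, |Φ x| ≤ M := fun x => hM ▸ le_ciSup hbdd x
  have habsV : |V| = V := abs_of_pos hV
  refine ⟨(integrable_one_div_fTW hΦc hΦ ?_).integrableOn,
    (integrable_one_div_fTW hΦc hΦ ?_).integrableOn,
    integral_one_div_fTW_neg_sub hΦ hV (by linarith)⟩
  · linarith
  · rw [abs_neg]; linarith
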